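/- arXiv:2008.04343 — 3 statements merged into one kernel-verified Lean document; each statement's English description precedes it below -/
import Mathlib

section
/- Let q : [0,1] → ℝ be continuously differentiable with q(0) = q(1) = 0. Then ∫₀¹ q(x)² dx ≤ (1/π²) ∫₀¹ q'(x)² dx (Poincaré inequality with optimal constant on the unit interval with Dirichlet boundary conditions). -/
open Real intervalIntegral

/-!
Reflect `q` oddly about `1` to a function `F` on `[0, 2]` with `F 0 = F 2 = 0` and mean zero;
its derivative is the even reflection of `q'`, so both square integrals double. On `[0, 2]` the
Fourier coefficients satisfy `ĉₙ(F') = π i n ĉₙ(F)` and `ĉ₀(F) = 0`, hence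
`π² ‖ĉₙ(F)‖² ≤ ‖ĉₙ(F')‖²` for every `n`, and Parseval's identity sums this to the inequality
(Wirtinger's inequality for period `2`).
-/

open MeasureTheory Set Complex
open scoped Interval

theorem ContinuousOn.memLp_restrict_of_isCompact {X E : Type*} [TopologicalSpace X]
    [T2Space X] [MeasurableSpace X] [OpensMeasurableSpace X] [NormedAddCommGroup E]
    [SecondCountableTopologyEither X E]
    {μ : Measure X} [IsFiniteMeasureOnCompacts μ] {s : Set X} {f : X → E}
    (hs : IsCompact s) (hf : ContinuousOn f s) {t : Set X} (hts : t ⊆ s) (p : ENNReal) :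
    MemLp f p (μ.restrict t) := by
  obtain ⟨C, hC⟩ := hs.exists_bound_of_continuousOn hf
  have : IsFiniteMeasure (μ.restrict s) := isFiniteMeasure_restrict.2 hs.measure_lt_top.ne
  exact (memLp_top_of_bound (hf.aestronglyMeasurable hs.measurableSet) C
    ((ae_restrict_iff' hs.measurableSet).2 (ae_of_all _ hC))).mono_exponent le_top
    |>.mono_measure (Measure.restrict_mono hts le_rfl)

theorem fourierCoeffOn_eq_mul_fourierCoeffOn_of_hasDerivAt {a b : ℝ} (hab : a < b)
    {f f' : ℝ → ℂ} (hf : ∀ x ∈ [[a, b]], HasDerivAt f (f' x) x)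
    (hf' : IntervalIntegrable f' volume a b) (hper : f a = f b) (n : ℤ) :
    fourierCoeffOn hab f' n = 2 * π * I * n / (b - a) * fourierCoeffOn hab f n := by
  rcases eq_or_ne n 0 with rfl | hn
  · simp [fourierCoeffOn_eq_integral, integral_eq_sub_of_hasDerivAt hf hf', hper]
  · rw [fourierCoeffOn_of_hasDerivAt hab hn hf hf', hper, sub_self, mul_zero, zero_sub]
    have hn' : (n : ℂ) ≠ 0 := Int.cast_ne_zero.2 hn
    have hba : (b - a : ℂ) ≠ 0 := sub_ne_zero.2 (ofReal_injective.ne hab.ne')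
    field_simp

theorem wirtinger_inequality {a b : ℝ} (hab : a < b) {f f' : ℝ → ℂ}
    (hf : ∀ x ∈ [[a, b]], HasDerivAt f (f' x) x) (hf' : MemLp f' 2 (volume.restrict (Ioc a b)))
    (hper : f a = f b) (hmean : ∫ x in a..b, f x = 0) :
    (2 * π / (b - a)) ^ 2 * ∫ x in a..b, ‖f x‖ ^ 2 ≤ ∫ x in a..b, ‖f' x‖ ^ 2 := by
  have hba : 0 < b - a := sub_pos.2 hab
  have hfL2 : MemLp f 2 (volume.restrict (Ioc a b)) :=
    (ContinuousOn.memLp_restrict_of_isCompact isCompact_uIcc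
      (fun x hx => (hf x hx).continuousAt.continuousWithinAt)
      (uIcc_of_le hab.le ▸ Ioc_subset_Icc_self) 2)
  have hf'int : IntervalIntegrable f' volume a b :=
    (intervalIntegrable_iff_integrableOn_Ioc_of_le hab.le).2 (hf'.integrable one_le_two)
  have hcoeff : ∀ n : ℤ, (2 * π / (b - a)) ^ 2 * ‖fourierCoeffOn hab f n‖ ^ 2
      ≤ ‖fourierCoeffOn hab f' n‖ ^ 2 := by
    intro n
    rcases eq_or_ne n 0 with rfl | hn
    · have hc0 : fourierCoeffOn hab f 0 = 0 := by
        simp [fourierCoeffOn_eq_integral, hmean]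
      simp [hc0]
    · have hn1 : (1 : ℝ) ≤ |(n : ℝ)| := by exact_mod_cast Int.one_le_abs hn
      rw [fourierCoeffOn_eq_mul_fourierCoeffOn_of_hasDerivAt hab hf hf'int hper, norm_mul]
      have hnorm : ‖2 * π * I * n / (b - a)‖ = 2 * π / (b - a) * |(n : ℝ)| := by
        rw [← ofReal_sub, norm_div, norm_real, Real.norm_of_nonneg hba.le]
        simp only [norm_mul, Complex.norm_ofNat, norm_real, norm_eq_abs, abs_of_pos pi_pos, norm_I,
          mul_one, norm_intCast]
        ring
      rw [hnorm, mul_pow, mul_pow]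
      gcongr
      exact le_mul_of_one_le_right (by positivity) (one_le_pow₀ hn1)
  have hsum := hasSum_le hcoeff ((hasSum_sq_fourierCoeffOn hab hfL2).mul_left _)
    (hasSum_sq_fourierCoeffOn hab hf')
  rw [smul_eq_mul, smul_eq_mul, mul_left_comm] at hsum
  exact le_of_mul_le_mul_left hsum (inv_pos.2 hba)

section Reflection

variable {E : Type*}

noncomputable def evenReflect (f : ℝ → E) (c : ℝ) (x : ℝ) : E :=
  if x ≤ c then f x else f (2 * c - x)

variable {f : ℝ → E} {c : ℝ}

theorem evenReflect_of_le {x : ℝ} (hx : x ≤ c) : evenReflect f c x = f x := if_pos hx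

theorem evenReflect_of_ge {x : ℝ} (hx : c ≤ x) : evenReflect f c x = f (2 * c - x) := by
  rcases hx.eq_or_lt with rfl | hx
  · simp [evenReflect, two_mul]
  · exact if_neg hx.not_ge

theorem continuous_evenReflect [TopologicalSpace E] (hf : Continuous f) :
    Continuous (evenReflect f c) :=
  Continuous.if_le hf (hf.comp (continuous_const.sub continuous_id)) continuous_id
    continuous_const fun x hx => by simp [hx, two_mul]

variable [NormedAddCommGroup E]

noncomputable def oddReflect (f : ℝ → E) (c : ℝ) (x : ℝ) : E :=
  if x ≤ c then f x else -f (2 * c - x)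

theorem oddReflect_of_le {x : ℝ} (hx : x ≤ c) : oddReflect f c x = f x := if_pos hx

theorem oddReflect_of_lt {x : ℝ} (hx : c < x) : oddReflect f c x = -f (2 * c - x) :=
  if_neg hx.not_ge

theorem oddReflect_of_ge (hc : f c = 0) {x : ℝ} (hx : c ≤ x) :
    oddReflect f c x = -f (2 * c - x) := by
  rcases hx.eq_or_lt with rfl | hx
  · simp [oddReflect, two_mul, hc]
  · exact oddReflect_of_lt hx

theorem sq_norm_oddReflect (x : ℝ) : ‖oddReflect f c x‖ ^ 2 = evenReflect (‖f ·‖ ^ 2) c x := by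
  unfold oddReflect evenReflect
  split_ifs <;> simp

theorem sq_norm_evenReflect (x : ℝ) :
    ‖evenReflect f c x‖ ^ 2 = evenReflect (‖f ·‖ ^ 2) c x := by
  unfold evenReflect
  split_ifs <;> rfl

variable [NormedSpace ℝ E]

theorem hasDerivAt_oddReflect {f' : ℝ → E} (hf : ∀ x, HasDerivAt f (f' x) x) (hc : f c = 0)
    (x : ℝ) : HasDerivAt (oddReflect f c) (evenReflect f' c x) x := by
  have hreflect : ∀ y, HasDerivAt (fun z => -f (2 * c - z)) (f' (2 * c - y)) y := fun y =>
    neg_neg (f' (2 * c - y)) ▸ ((hf (2 * c - y)).comp_const_sub (2 * c) y).neg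
  rcases lt_trichotomy x c with hx | rfl | hx
  · rw [evenReflect_of_le hx.le]
    exact (hf x).congr_of_eventuallyEq <|
      (eventually_le_nhds hx).mono fun y hy => oddReflect_of_le hy
  · have hleft : HasDerivWithinAt (oddReflect f x) (f' x) (Iic x) x :=
      (hf x).hasDerivWithinAt.congr (fun y hy => oddReflect_of_le hy) (oddReflect_of_le le_rfl)
    have hright : HasDerivWithinAt (oddReflect f x) (f' x) (Ici x) x := by
      have := (hreflect x).hasDerivWithinAt (s := Ici x)
      rw [show 2 * x - x = x by ring] at this
      exact this.congr (fun y hy => oddReflect_of_ge hc hy) (oddReflect_of_ge hc le_rfl)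
    rw [evenReflect_of_le le_rfl, ← hasDerivWithinAt_univ, ← Iic_union_Ici]
    exact hleft.union hright
  · rw [evenReflect_of_ge hx.le]
    exact (hreflect x).congr_of_eventuallyEq <|
      (eventually_gt_nhds hx).mono fun y hy => oddReflect_of_lt hy

theorem integral_ite_le_comp_const_sub {g h : ℝ → E} {a : ℝ} (hac : a ≤ c)
    (hg : IntervalIntegrable g volume a c) (hh : IntervalIntegrable h volume a c) :
    ∫ x in a..2 * c - a, (if x ≤ c then g x else h (2 * c - x))
      = (∫ x in a..c, g x) + ∫ x in a..c, h x := by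
  have hleft : EqOn (fun x => if x ≤ c then g x else h (2 * c - x)) g (Ι a c) :=
    fun x hx => if_pos (uIoc_of_le hac ▸ hx).2
  have hright : EqOn (fun x => if x ≤ c then g x else h (2 * c - x)) (fun x => h (2 * c - x))
      (Ι c (2 * c - a)) :=
    fun x hx => if_neg (uIoc_of_le (show c ≤ 2 * c - a by linarith) ▸ hx).1.not_ge
  have hbounds : 2 * c - (2 * c - a) = a ∧ 2 * c - c = c := ⟨by ring, by ring⟩
  have hh' : IntervalIntegrable (fun x => h (2 * c - x)) volume c (2 * c - a) := by
    simpa [hbounds] using (hh.comp_sub_left (2 * c)).symm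
  rw [← integral_add_adjacent_intervals ((intervalIntegrable_congr hleft).2 hg)
    ((intervalIntegrable_congr hright).2 hh'), integral_congr_ae (ae_of_all _ hleft),
    integral_congr_ae (ae_of_all _ hright), integral_comp_sub_left, hbounds.1, hbounds.2]

theorem integral_oddReflect {a : ℝ} (hac : a ≤ c) (hf : IntervalIntegrable f volume a c) :
    ∫ x in a..2 * c - a, oddReflect f c x = 0 := by
  rw [show oddReflect f c = fun x => if x ≤ c then f x else (-f) (2 * c - x) from rfl,
    integral_ite_le_comp_const_sub hac hf hf.neg]
  simp [intervalIntegral.integral_neg]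

theorem integral_evenReflect {a : ℝ} (hac : a ≤ c) (hf : IntervalIntegrable f volume a c) :
    ∫ x in a..2 * c - a, evenReflect f c x = 2 • ∫ x in a..c, f x := by
  rw [show evenReflect f c = fun x => if x ≤ c then f x else f (2 * c - x) from rfl,
    integral_ite_le_comp_const_sub hac hf hf, two_nsmul]

end Reflection

theorem poincare_inequality_unit_interval
    (q : ℝ → ℝ) (hq : ContDiff ℝ 1 q)
    (h0 : q 0 = 0) (h1 : q 1 = 0) :
    ∫ x in (0:ℝ)..1, (q x) ^ 2 ≤ (1 / π ^ 2) * ∫ x in (0:ℝ)..1, (deriv q x) ^ 2 := by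
  set Q : ℝ → ℂ := fun x => q x with hQ
  set Q' : ℝ → ℂ := fun x => (deriv q x : ℝ) with hQ'
  have hQQ' : ∀ x, HasDerivAt Q (Q' x) x := fun x =>
    ((hq.differentiable one_ne_zero) x).hasDerivAt.ofReal_comp
  have hQ'c : Continuous Q' := continuous_ofReal.comp (hq.continuous_deriv le_rfl)
  have hQ1 : Q 1 = 0 := by simp [hQ, h1]
  have hper : oddReflect Q 1 0 = oddReflect Q 1 (2 * 1 - 0) := by
    rw [oddReflect_of_le zero_le_one, oddReflect_of_ge hQ1 (by norm_num)]
    simp [hQ, h0]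
  have hQ'L2 : MemLp (evenReflect Q' 1) 2 (volume.restrict (Ioc 0 (2 * 1 - 0))) :=
    (continuous_evenReflect hQ'c).continuousOn.memLp_restrict_of_isCompact
      isCompact_Icc Ioc_subset_Icc_self 2
  have key := wirtinger_inequality (by norm_num) (fun x _ => hasDerivAt_oddReflect hQQ' hQ1 x)
    hQ'L2 hper (integral_oddReflect zero_le_one (Continuous.intervalIntegrable (by fun_prop) 0 1))
  simp only [sq_norm_oddReflect, sq_norm_evenReflect] at key
  rw [integral_evenReflect zero_le_one (Continuous.intervalIntegrable (by fun_prop) 0 1),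
    integral_evenReflect zero_le_one (Continuous.intervalIntegrable (by fun_prop) 0 1)] at key
  norm_num [hQ, hQ', norm_real, sq_abs] at key
  rw [one_div_mul_eq_div, le_div_iff₀ (by positivity)]
  linarith
end

section
/- Suppose p is C² on [0,1]² and satisfies p_xx + δ^{-2} p_zz = 0 with boundary conditions p_z(x,1) = 0 and p_z(x,0) = -δ² a(x) for a continuous function a. Then the z-average p₀(x) = ∫₀¹ p(x,z) dz satisfies p₀''(x) = -a(x) for all x ∈ (0,1). -/
/-!
Differentiating twice under the integral sign, `p₀'' = ∫₀¹ p_xx dz`. The equation turns this into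
`-δ⁻² ∫₀¹ p_zz dz`, which by the fundamental theorem of calculus in `z` is
`-δ⁻² (p_z(x,1) - p_z(x,0))`, and the boundary conditions make it `-a(x)`.
-/

open intervalIntegral Function

variable {E : Type*} [NormedAddCommGroup E] [NormedSpace ℝ E]

theorem hasDerivAt_intervalIntegral_of_continuous_uncurry [CompleteSpace E] {F F' : ℝ → ℝ → E}
    (hF : Continuous (uncurry F)) (hF' : Continuous (uncurry F'))
    (hF_deriv : ∀ x t, HasDerivAt (F · t) (F' x t) x) (a b x₀ : ℝ) :
    HasDerivAt (fun x => ∫ t in a..b, F x t) (∫ t in a..b, F' x₀ t) x₀ := by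
  obtain ⟨C, hC⟩ := ((isCompact_closedBall x₀ 1).prod (isCompact_uIcc (a := a) (b := b)))
    |>.exists_bound_of_continuousOn hF'.continuousOn
  refine (hasDerivAt_integral_of_dominated_loc_of_deriv_le (bound := fun _ => C)
    (Metric.closedBall_mem_nhds x₀ one_pos)
    (.of_forall fun x => (hF.comp (.prodMk_right x)).aestronglyMeasurable)
    ((hF.comp (.prodMk_right x₀)).intervalIntegrable a b)
    (hF'.comp (.prodMk_right x₀)).aestronglyMeasurable ?_ intervalIntegrable_const
    (.of_forall fun t _ x _ => hF_deriv x t)).2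
  exact .of_forall fun t ht x hx => hC (x, t) ⟨hx, Set.uIoc_subset_uIcc ht⟩

variable {f : ℝ → ℝ → E} {n : WithTop ℕ∞}

theorem ContDiff.hasDerivAt_slice_fst (hf : ContDiff ℝ n (uncurry f)) (hn : n ≠ 0) (x z : ℝ) :
    HasDerivAt (f · z) (fderiv ℝ (uncurry f) (x, z) (1, 0)) x :=
  show HasDerivAt (uncurry f ∘ (·, z)) _ x from
    (hf.differentiable hn (x, z)).hasFDerivAt.comp_hasDerivAt x
      ((hasDerivAt_id' x).prodMk (hasDerivAt_const x z))

theorem ContDiff.hasDerivAt_slice_snd (hf : ContDiff ℝ n (uncurry f)) (hn : n ≠ 0) (x z : ℝ) :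
    HasDerivAt (f x) (fderiv ℝ (uncurry f) (x, z) (0, 1)) z :=
  (hf.differentiable hn (x, z)).hasFDerivAt.comp_hasDerivAt z
    ((hasDerivAt_const z x).prodMk (hasDerivAt_id' z))

theorem ContDiff.uncurry_deriv_fst (hf : ContDiff ℝ (n + 1) (uncurry f)) :
    ContDiff ℝ n (uncurry fun x z => deriv (f · z) x) := by
  have hpartial : (uncurry fun x z => deriv (f · z) x) = fun q => fderiv ℝ (uncurry f) q (1, 0) :=
    funext fun q => (hf.hasDerivAt_slice_fst (by simp) q.1 q.2).deriv
  rw [hpartial]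
  exact (hf.fderiv_right le_rfl).clm_apply contDiff_const

theorem ContDiff.uncurry_deriv_snd (hf : ContDiff ℝ (n + 1) (uncurry f)) :
    ContDiff ℝ n (uncurry fun x z => deriv (f x) z) := by
  have hpartial : (uncurry fun x z => deriv (f x) z) = fun q => fderiv ℝ (uncurry f) q (0, 1) :=
    funext fun q => (hf.hasDerivAt_slice_snd (by simp) q.1 q.2).deriv
  rw [hpartial]
  exact (hf.fderiv_right le_rfl).clm_apply contDiff_const

variable [CompleteSpace E]

theorem ContDiff.hasDerivAt_intervalIntegral (hf : ContDiff ℝ 1 (uncurry f)) (a b x : ℝ) :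
    HasDerivAt (fun x => ∫ z in a..b, f x z) (∫ z in a..b, deriv (f · z) x) x :=
  hasDerivAt_intervalIntegral_of_continuous_uncurry hf.continuous
    (hf.uncurry_deriv_fst (n := 0)).continuous
    (fun x z => (hf.hasDerivAt_slice_fst one_ne_zero x z).differentiableAt.hasDerivAt) a b x

theorem ContDiff.deriv_deriv_intervalIntegral (hf : ContDiff ℝ 2 (uncurry f)) (a b x : ℝ) :
    deriv (deriv fun x => ∫ z in a..b, f x z) x = ∫ z in a..b, deriv (deriv (f · z)) x := by
  have hf1 : ContDiff ℝ 1 (uncurry f) := hf.of_le (by norm_num)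
  have hderiv : deriv (fun x => ∫ z in a..b, f x z) = fun x => ∫ z in a..b, deriv (f · z) x :=
    funext fun x => (hf1.hasDerivAt_intervalIntegral a b x).deriv
  have hf' : ContDiff ℝ 1 (uncurry fun x z => deriv (f · z) x) :=
    hf.uncurry_deriv_fst (n := 1)
  rw [hderiv]
  exact (hf'.hasDerivAt_intervalIntegral a b x).deriv

theorem ContDiff.integral_deriv_deriv_snd (hf : ContDiff ℝ 2 (uncurry f)) (x a b : ℝ) :
    ∫ z in a..b, deriv (deriv (f x)) z = deriv (f x) b - deriv (f x) a := by
  have hf' : ContDiff ℝ 1 (uncurry fun x z => deriv (f x) z) :=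
    hf.uncurry_deriv_snd (n := 1)
  have hf'' : Continuous (uncurry fun x z => deriv (deriv (f x)) z) :=
    (hf'.uncurry_deriv_snd (n := 0)).continuous
  exact integral_eq_sub_of_hasDerivAt
    (fun z _ => (hf'.hasDerivAt_slice_snd one_ne_zero x z).differentiableAt.hasDerivAt)
    ((hf''.comp (.prodMk_right x)).intervalIntegrable a b)

theorem averaged_pressure_equation_general
    (δ : ℝ) (hδ : 0 < δ)
    (p : ℝ → ℝ → ℝ) (a : ℝ → ℝ)
    (hp : ContDiff ℝ 2 (fun q : ℝ × ℝ => p q.1 q.2))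
    (hpde : ∀ x z, x ∈ Set.Icc (0:ℝ) 1 → z ∈ Set.Icc (0:ℝ) 1 →
      deriv (deriv (fun x' => p x' z)) x + (1 / δ ^ 2) * deriv (deriv (p x)) z = 0)
    (hbc1 : ∀ x, x ∈ Set.Icc (0:ℝ) 1 → deriv (p x) 1 = 0)
    (hbc0 : ∀ x, x ∈ Set.Icc (0:ℝ) 1 → deriv (p x) 0 = -δ ^ 2 * a x)
    (p₀ : ℝ → ℝ) (hp₀ : ∀ x, p₀ x = ∫ z in (0:ℝ)..1, p x z) :
    ∀ x, x ∈ Set.Ioo (0:ℝ) 1 → deriv (deriv p₀) x = -a x := by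
  intro x hx
  have hx' : x ∈ Set.Icc (0:ℝ) 1 := Set.Ioo_subset_Icc_self hx
  rw [funext hp₀]
  calc deriv (deriv fun x => ∫ z in (0:ℝ)..1, p x z) x
      = ∫ z in (0:ℝ)..1, deriv (deriv (p · z)) x := hp.deriv_deriv_intervalIntegral 0 1 x
    _ = ∫ z in (0:ℝ)..1, -(1 / δ ^ 2) * deriv (deriv (p x)) z := by
      refine integral_congr fun z hz => ?_
      rw [Set.uIcc_of_le zero_le_one] at hz
      linarith [hpde x z hx' hz]
    _ = -(1 / δ ^ 2) * (deriv (p x) 1 - deriv (p x) 0) := by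
      rw [integral_const_mul, hp.integral_deriv_deriv_snd]
    _ = -a x := by
      rw [hbc1 x hx', hbc0 x hx']
      field_simp
      ring

theorem averaged_pressure_equation
    (δ : ℝ) (hδ : 0 < δ)
    (p : ℝ → ℝ → ℝ) (a : ℝ → ℝ)
    (hp : ContDiff ℝ 2 (fun q : ℝ × ℝ => p q.1 q.2))
    (ha : Continuous a)
    (hpde : ∀ x z, x ∈ Set.Icc (0:ℝ) 1 → z ∈ Set.Icc (0:ℝ) 1 →
      deriv (deriv (fun x' => p x' z)) x + (1 / δ ^ 2) * deriv (deriv (p x)) z = 0)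
    (hbc1 : ∀ x, x ∈ Set.Icc (0:ℝ) 1 → deriv (p x) 1 = 0)
    (hbc0 : ∀ x, x ∈ Set.Icc (0:ℝ) 1 → deriv (p x) 0 = -δ ^ 2 * a x)
    (p₀ : ℝ → ℝ) (hp₀ : ∀ x, p₀ x = ∫ z in (0:ℝ)..1, p x z) :
    ∀ x, x ∈ Set.Ioo (0:ℝ) 1 → deriv (deriv p₀) x = -a x :=
  averaged_pressure_equation_general δ hδ p a hp hpde hbc1 hbc0 p₀ hp₀
end

section
/- Let ψ : [0,1] × [0,T] → ℝ be continuous with ψ_x continuous, and suppose w satisfies ẇ(x,t) = -∫₀ᵗ ψ_xx(x,s) ds with ψ(0,t) = ψ(1,t) = 0. Then ∫₀ᵀ∫₀¹ ψ(x,t) ẇ(x,t) dx dt = (1/2) ∫₀¹ (∫₀ᵀ ψ_x(x,t) dt)² dx ≥ 0. -/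
open Real MeasureTheory intervalIntegral

/-
Write `g = ψ_x`. Since `ẇ(·,t) = -∂ₓ ∫₀ᵗ g(·,s) ds`, integrating by parts in `x` (the boundary terms
vanish by the Dirichlet conditions) turns `∫₀¹ ψ ẇ dx` into `∫₀¹ g(x,t) G(x,t) dx` with
`G(x,t) = ∫₀ᵗ g(x,s) ds`. After Fubini, the time integral `∫₀ᵀ g G dt = ∫₀ᵀ ∂ₜ (G²/2) dt` is
`G(x,T)²/2`, which is nonnegative.
-/

open Function Set

theorem hasDerivAt_intervalIntegral_of_continuous {E : Type*} [NormedAddCommGroup E]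
    [NormedSpace ℝ E] {F F' : ℝ → ℝ → E} {a b x₀ : ℝ} (hF : ∀ x, Continuous (F x))
    (hF' : Continuous (uncurry F')) (hderiv : ∀ x t, HasDerivAt (F · t) (F' x t) x) :
    HasDerivAt (fun x => ∫ t in a..b, F x t) (∫ t in a..b, F' x₀ t) x₀ := by
  obtain ⟨C, hC⟩ := ((isCompact_closedBall x₀ 1).prod (isCompact_uIcc (a := a) (b := b))
    ).exists_bound_of_continuousOn hF'.continuousOn
  refine (hasDerivAt_integral_of_dominated_loc_of_deriv_le (bound := fun _ => C)
    (Metric.closedBall_mem_nhds x₀ one_pos) (.of_forall fun x => (hF x).aestronglyMeasurable)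
    ((hF x₀).intervalIntegrable a b) (hF'.uncurry_left x₀).aestronglyMeasurable
    (.of_forall fun t ht x hx => hC (x, t) ⟨hx, uIoc_subset_uIcc ht⟩) intervalIntegrable_const
    (.of_forall fun t _ x _ => hderiv x t)).2

theorem integral_mul_primitive_eq_sq_div_two {g : ℝ → ℝ} (hg : Continuous g) (a b : ℝ) :
    ∫ t in a..b, g t * ∫ s in a..t, g s = (∫ t in a..b, g t) ^ 2 / 2 := by
  have hderiv : ∀ t, HasDerivAt (fun t => (∫ s in a..t, g s) ^ 2 / 2)
      (g t * ∫ s in a..t, g s) t := fun t => by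
    refine (((hg.integral_hasStrictDerivAt a t).hasDerivAt.fun_pow 2).div_const 2).congr_deriv ?_
    push_cast
    ring
  rw [integral_eq_sub_of_hasDerivAt (fun t _ => hderiv t)
    ((hg.mul (continuous_primitive hg.intervalIntegrable a)).intervalIntegrable a b)]
  simp

theorem integral_integral_mul_primitive {g : ℝ → ℝ → ℝ} (hg : Continuous (uncurry g))
    (a b c d : ℝ) :
    ∫ t in c..d, ∫ x in a..b, g x t * ∫ s in c..t, g x s =
      (1 / 2) * ∫ x in a..b, (∫ t in c..d, g x t) ^ 2 := by
  have hcont : Continuous (uncurry fun t x => g x t * ∫ s in c..t, g x s) :=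
    (hg.comp continuous_swap).mul
      ((continuous_parametric_primitive_of_continuous hg).comp continuous_swap)
  rw [intervalIntegral_intervalIntegral_swap ((hcont.continuousOn.integrableOn_compact
    (isCompact_uIcc.prod isCompact_uIcc)).mono_set (prod_mono uIoc_subset_uIcc uIoc_subset_uIcc))]
  simp only [integral_mul_primitive_eq_sq_div_two (hg.uncurry_left _), intervalIntegral.integral_div]
  ring

theorem integral_mul_neg_deriv_eq_of_eq_zero {u u' v v' : ℝ → ℝ} {a b : ℝ}
    (hu : ∀ x, HasDerivAt u (u' x) x) (hv : ∀ x, HasDerivAt v (v' x) x)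
    (hu' : IntervalIntegrable u' volume a b) (hv' : IntervalIntegrable v' volume a b)
    (ha : u a = 0) (hb : u b = 0) :
    ∫ x in a..b, u x * -v' x = ∫ x in a..b, u' x * v x := by
  simp only [mul_neg, intervalIntegral.integral_neg,
    integral_mul_deriv_eq_deriv_mul (fun x _ => hu x) (fun x _ => hv x) hu' hv', ha, hb]
  ring

theorem cross_term_nonnegative_general
    (T : ℝ)
    (ψ w : ℝ → ℝ → ℝ)
    (hψ : ∀ t, ContDiff ℝ 2 (fun x => ψ x t))
    (hψxc : Continuous (fun y : ℝ × ℝ => deriv (fun x' => ψ x' y.2) y.1))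
    (hψxxc : Continuous (fun y : ℝ × ℝ => deriv (deriv (fun x' => ψ x' y.2)) y.1))
    (hbc : ∀ t, ψ 0 t = 0 ∧ ψ 1 t = 0)
    (hw : ∀ x t, deriv (w x) t = -∫ s in (0:ℝ)..t, deriv (deriv (fun x' => ψ x' s)) x) :
    (∫ t in (0:ℝ)..T, ∫ x in (0:ℝ)..1, ψ x t * deriv (w x) t) =
      (1 / 2) * ∫ x in (0:ℝ)..1, (∫ t in (0:ℝ)..T, deriv (fun x' => ψ x' t) x) ^ 2 ∧
    0 ≤ ∫ t in (0:ℝ)..T, ∫ x in (0:ℝ)..1, ψ x t * deriv (w x) t := by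
  set g : ℝ → ℝ → ℝ := fun x t => deriv (fun x' => ψ x' t) x
  set h : ℝ → ℝ → ℝ := fun x t => deriv (deriv (fun x' => ψ x' t)) x
  have hψ_deriv : ∀ t x, HasDerivAt (ψ · t) (g x t) x := fun t x =>
    ((hψ t).differentiable two_ne_zero x).hasDerivAt
  have hg_deriv : ∀ t x, HasDerivAt (g · t) (h x t) x := fun t x =>
    ((hψ t).differentiable_deriv_two x).hasDerivAt
  have hG_deriv : ∀ t x, HasDerivAt (fun x => ∫ s in (0:ℝ)..t, g x s) (∫ s in (0:ℝ)..t, h x s) x :=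
    fun t x => hasDerivAt_intervalIntegral_of_continuous hψxc.uncurry_left hψxxc
      (fun x s => hg_deriv s x)
  have hparts : ∀ t, ∫ x in (0:ℝ)..1, ψ x t * deriv (w x) t =
      ∫ x in (0:ℝ)..1, g x t * ∫ s in (0:ℝ)..t, g x s := fun t => by
    simp only [hw]
    exact integral_mul_neg_deriv_eq_of_eq_zero (hψ_deriv t) (hG_deriv t)
      ((hψxc.uncurry_right t).intervalIntegrable 0 1)
      ((continuous_parametric_intervalIntegral_of_continuous' hψxxc 0 t).intervalIntegrable 0 1)
      (hbc t).1 (hbc t).2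
  have key := (integral_congr fun t _ => hparts t).trans
    (integral_integral_mul_primitive (g := g) hψxc 0 1 0 T)
  refine ⟨key, key ▸ mul_nonneg one_half_pos.le (integral_nonneg zero_le_one fun x _ => sq_nonneg _)⟩

theorem cross_term_nonnegative
    (T : ℝ) (hT : 0 < T)
    (ψ w : ℝ → ℝ → ℝ)
    (hψ : ∀ t, ContDiff ℝ 2 (fun x => ψ x t))
    (hψc : Continuous (fun y : ℝ × ℝ => ψ y.1 y.2))
    (hψxc : Continuous (fun y : ℝ × ℝ => deriv (fun x' => ψ x' y.2) y.1))
    (hψxxc : Continuous (fun y : ℝ × ℝ => deriv (deriv (fun x' => ψ x' y.2)) y.1))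
    (hbc : ∀ t, ψ 0 t = 0 ∧ ψ 1 t = 0)
    (hw : ∀ x t, deriv (w x) t = -∫ s in (0:ℝ)..t, deriv (deriv (fun x' => ψ x' s)) x) :
    (∫ t in (0:ℝ)..T, ∫ x in (0:ℝ)..1, ψ x t * deriv (w x) t) =
      (1 / 2) * ∫ x in (0:ℝ)..1, (∫ t in (0:ℝ)..T, deriv (fun x' => ψ x' t) x) ^ 2 ∧
    0 ≤ ∫ t in (0:ℝ)..T, ∫ x in (0:ℝ)..1, ψ x t * deriv (w x) t :=
  cross_term_nonnegative_general T ψ w hψ hψxc hψxxc hbc hw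
end
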